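/- Let G be a finite multigraph with a fixed reference orientation and let k ∈ ℤ_{>0}^E. Then φ_G(k) equals the sum, over all totally cyclic orientations σ of G, of the number of vectors x ∈ ℤ^E with 0 < x_e < k_e for all e ∈ E that are flows with respect to σ (i.e., at every vertex the sum of x_e over edges whose σ-head is v equals the sum over edges whose σ-tail is v). Equivalently, the map sending a nowhere-zero k-flow x to the pair (σ, |x|), where σ is the unique orientation compatible with x and |x| = (|x_e|)_{e ∈ E}, is a bijection from the set of nowhere-zero k-flows onto the set of pairs (σ, y) with σ a totally cyclic orientation of G and y a σ-flow satisfying 0 < y_e < k_e for all e. -/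

import Mathlib

open Finset

/-- A finite multigraph with a fixed (reference) orientation is given by vertex type `V`,
edge type `E`, and head/tail maps `hd tl : E → V`.  `IsFlow hd tl x` says that the integer
edge labeling `x` satisfies conservation of flow at every vertex. -/
def IsFlow {V E : Type*} [Fintype E] [DecidableEq V] (hd tl : E → V) (x : E → ℤ) : Prop :=
  ∀ v : V, ∑ e ∈ Finset.univ.filter (fun e => hd e = v), x e =
    ∑ e ∈ Finset.univ.filter (fun e => tl e = v), x e

/-- `flowCount hd tl k` is the number of nowhere-zero `k`-flows, i.e. integral flows `x`
with `x e ≠ 0` and `|x e| < k e` for every edge `e`. -/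
noncomputable def flowCount {V E : Type*} [Fintype E] [DecidableEq V]
    (hd tl : E → V) (k : E → ℤ) : ℕ :=
  Nat.card {x : E → ℤ // IsFlow hd tl x ∧ ∀ e, x e ≠ 0 ∧ |x e| < k e}

/-- The number of connected components of the underlying undirected multigraph. -/
noncomputable def numComponents {V E : Type*} [Fintype V] (hd tl : E → V) : ℕ :=
  Nat.card (SimpleGraph.fromRel
    fun u v => ∃ e, (hd e = u ∧ tl e = v) ∨ (hd e = v ∧ tl e = u)).ConnectedComponent

/-- The cyclomatic number `ξ_G = |E| − |V| + c(G)`. -/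
noncomputable def cyclomatic {V E : Type*} [Fintype V] [Fintype E] (hd tl : E → V) : ℕ :=
  Fintype.card E + numComponents hd tl - Fintype.card V

/-- An edge `b` is a bridge if deleting it increases the number of connected components. -/
def IsBridge {V E : Type*} [Fintype V] (hd tl : E → V) (b : E) : Prop :=
  numComponents hd tl <
    numComponents (fun e : {e : E // e ≠ b} => hd e.1) (fun e : {e : E // e ≠ b} => tl e.1)

/-- An orientation (given by head/tail maps) is totally cyclic if every edge lies in a
coherently oriented cycle (a cyclic sequence of distinct edges in which the head of each
edge is the tail of the next). -/
def IsTotallyCyclic {V E : Type*} (hd tl : E → V) : Prop :=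
  ∀ e : E, ∃ (n : ℕ) (c : Fin (n + 1) → E), Function.Injective c ∧ (∃ i, c i = e) ∧
    ∀ i : Fin (n + 1), hd (c i) = tl (c (i + 1))

/-- Reorienting the reference orientation by `σ : E → Bool` (`true` = keep the reference
direction, `false` = reverse it): the new head map. -/
def oHead {V E : Type*} (hd tl : E → V) (σ : E → Bool) : E → V :=
  fun e => if σ e then hd e else tl e

/-- Reorienting the reference orientation by `σ : E → Bool`: the new tail map. -/
def oTail {V E : Type*} (hd tl : E → V) (σ : E → Bool) : E → V :=
  fun e => if σ e then tl e else hd e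

/-- An orientation `σ` is compatible with an integral flow `x` if it keeps the reference
direction on edges with positive flow and reverses it on edges with negative flow. -/
def Compatible {E : Type*} (x : E → ℤ) (σ : E → Bool) : Prop :=
  ∀ e, (0 < x e → σ e = true) ∧ (x e < 0 → σ e = false)

/-!
A nowhere-zero flow `x` is recovered from its sign pattern `σ` and its absolute values `|x|`,
and `x` is a flow exactly when `|x|` is a flow for the orientation `σ`. What remains is that an
orientation carrying a strictly positive flow is totally cyclic. Let `R` be the set of vertices
reachable from the head of an edge `e`. No edge leaves `R`, and the net flow into `R` is zero,
so no edge enters `R` either, as each edge carries positive flow. Hence the tail of `e` lies in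
`R`, and a walk back to it without repeated vertices closes up with `e` into a coherent cycle.
-/

section

variable {V E : Type*}

def IsWalk (hd tl : E → V) : V → V → List E → Prop
  | a, b, [] => a = b
  | a, b, f :: L => tl f = a ∧ IsWalk hd tl (hd f) b L

namespace IsWalk

variable {hd tl : E → V} {a b c : V} {L L₁ L₂ : List E}

theorem append (h₁ : IsWalk hd tl a b L₁) (h₂ : IsWalk hd tl b c L₂) :
    IsWalk hd tl a c (L₁ ++ L₂) := by
  induction L₁ generalizing a with
  | nil => exact (show a = b from h₁) ▸ h₂
  | cons f L ih => exact ⟨h₁.1, ih h₁.2⟩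

theorem of_append (h : IsWalk hd tl a c (L₁ ++ L₂)) :
    ∃ b, IsWalk hd tl a b L₁ ∧ IsWalk hd tl b c L₂ := by
  induction L₁ generalizing a with
  | nil => exact ⟨a, rfl, h⟩
  | cons f L ih =>
    obtain ⟨b, h₁, h₂⟩ := ih h.2
    exact ⟨b, ⟨h.1, h₁⟩, h₂⟩

/-- Cutting out closed subwalks leaves a walk that visits no vertex twice. -/
theorem exists_nodup (h : IsWalk hd tl a b L) :
    ∃ L', IsWalk hd tl a b L' ∧ (a :: L'.map hd).Nodup := by
  induction L generalizing a with
  | nil => exact ⟨[], h, List.nodup_singleton a⟩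
  | cons f L ih =>
    obtain ⟨L', hL', hnd⟩ := ih h.2
    have hwalk : IsWalk hd tl a b (f :: L') := ⟨h.1, hL'⟩
    by_cases ha : a ∈ (f :: L').map hd
    · obtain ⟨g, hg, rfl⟩ := List.mem_map.mp ha
      obtain ⟨pre, suf, hsplit⟩ := List.append_of_mem hg
      rw [hsplit] at hwalk
      obtain ⟨_, -, -, hsuf⟩ := hwalk.of_append
      refine ⟨suf, hsuf, ?_⟩
      have hnd' : ((f :: L').map hd).Nodup := hnd
      rw [hsplit, List.map_append, List.map_cons] at hnd'
      exact hnd'.sublist (List.sublist_append_right _ _)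
    · exact ⟨f :: L', hwalk, List.nodup_cons.mpr ⟨ha, hnd⟩⟩

theorem tl_getElem_zero (h : IsWalk hd tl a b L) (hL : 0 < L.length) : tl L[0] = a := by
  cases L with
  | nil => simp at hL
  | cons f L => exact h.1

theorem hd_getElem_eq_tl_getElem_succ (h : IsWalk hd tl a b L) (i : ℕ)
    (hi : i + 1 < L.length) : hd L[i] = tl L[i + 1] := by
  induction L generalizing a i with
  | nil => simp at hi
  | cons f L ih =>
    cases i with
    | zero => exact (h.2.tl_getElem_zero _).symm
    | succ i => exact ih h.2 i (by simpa using hi)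

theorem hd_getLast (h : IsWalk hd tl a b L) (hL : L ≠ []) : hd (L.getLast hL) = b := by
  induction L generalizing a with
  | nil => contradiction
  | cons f L ih =>
    cases L with
    | nil => exact h.2
    | cons g L => exact ih h.2 (List.cons_ne_nil g L)

theorem hd_getElem_eq_tl_getElem_mod (h : IsWalk hd tl a a L) (i : ℕ) (hi : i < L.length) :
    hd L[i] = tl (L[(i + 1) % L.length]'(Nat.mod_lt _ (by omega))) := by
  by_cases hlast : i + 1 < L.length
  · simp only [Nat.mod_eq_of_lt hlast]
    exact h.hd_getElem_eq_tl_getElem_succ i hlast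
  · have hi' : i = L.length - 1 := by omega
    have hne : L ≠ [] := List.ne_nil_of_length_pos (by omega)
    simp only [hi', Nat.sub_add_cancel (List.length_pos_of_ne_nil hne), Nat.mod_self]
    rw [← List.getLast_eq_getElem hne, h.hd_getLast hne, h.tl_getElem_zero (by omega)]

theorem exists_cycle (h : IsWalk hd tl a a L) (hL : L.Nodup) {e : E} (he : e ∈ L) :
    ∃ (n : ℕ) (c : Fin (n + 1) → E), Function.Injective c ∧ (∃ i, c i = e) ∧
      ∀ i : Fin (n + 1), hd (c i) = tl (c (i + 1)) := by
  obtain ⟨n, hn⟩ : ∃ n, L.length = n + 1 :=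
    Nat.exists_eq_add_one.mpr (List.length_pos_of_mem he)
  obtain ⟨j, hj, rfl⟩ := List.getElem_of_mem he
  refine ⟨n, fun i => L[i.val], fun i i' hii' => Fin.ext (hL.getElem_inj_iff.mp hii'),
    ⟨⟨j, by omega⟩, rfl⟩, fun i => ?_⟩
  have hsucc : ((i + 1 : Fin (n + 1)) : ℕ) = (i + 1) % L.length := by
    rw [Fin.val_add, hn, Fin.val_one', Nat.add_mod_mod]
  simp only [hsucc]
  exact h.hd_getElem_eq_tl_getElem_mod i (by omega)

end IsWalk

theorem isTotallyCyclic_of_forall_isWalk {hd tl : E → V}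
    (h : ∀ e, ∃ L, IsWalk hd tl (hd e) (tl e) L) : IsTotallyCyclic hd tl := by
  intro e
  obtain ⟨L, hL⟩ := h e
  obtain ⟨L', hL', hnd⟩ := hL.exists_nodup
  have hcycle : IsWalk hd tl (tl e) (tl e) (e :: L') := ⟨rfl, hL'⟩
  exact hcycle.exists_cycle (List.Nodup.of_map hd hnd) List.mem_cons_self

def reorient (σ : E → Bool) (y : E → ℤ) : E → ℤ := fun e => if σ e then y e else -y e

theorem abs_reorient (σ : E → Bool) (y : E → ℤ) (e : E) : |reorient σ y e| = |y e| := by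
  unfold reorient; split_ifs <;> simp

theorem decide_pos_reorient (σ : E → Bool) {y : E → ℤ} {e : E} (hy : 0 < y e) :
    decide (0 < reorient σ y e) = σ e := by
  unfold reorient; cases σ e <;> simp [hy, hy.le]

theorem reorient_decide_pos_abs (x : E → ℤ) :
    reorient (fun e => decide (0 < x e)) (fun e => |x e|) = x := by
  funext e
  rcases lt_or_ge 0 (x e) with hx | hx
  · simp [reorient, hx, abs_of_pos hx]
  · simp [reorient, hx.not_gt, abs_of_nonpos hx]

section Flow

variable [Fintype E] [DecidableEq V] {hd tl : E → V}

theorem isFlow_iff_forall_sum_sub_eq_zero {x : E → ℤ} : IsFlow hd tl x ↔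
    ∀ v, ∑ e, ((if hd e = v then x e else 0) - (if tl e = v then x e else 0)) = 0 := by
  simp only [sum_sub_distrib, ← sum_filter, sub_eq_zero]
  rfl

theorem IsFlow.sum_cut_eq_zero {x : E → ℤ} (hx : IsFlow hd tl x) (S : Finset V) :
    ∑ e, ((if hd e ∈ S then x e else 0) - (if tl e ∈ S then x e else 0)) = 0 := by
  calc _ = ∑ v ∈ S, ∑ e, ((if hd e = v then x e else 0) - (if tl e = v then x e else 0)) := by
        rw [sum_comm]
        refine sum_congr rfl fun e _ => ?_
        rw [sum_sub_distrib, sum_ite_eq, sum_ite_eq]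
    _ = 0 := sum_eq_zero fun v _ => isFlow_iff_forall_sum_sub_eq_zero.mp hx v

/-- The net flow into `S` vanishes, and no edge carries flow out of `S`. -/
theorem IsFlow.tl_mem_of_hd_mem {y : E → ℤ} (hy : IsFlow hd tl y) (hpos : ∀ e, 0 < y e)
    {S : Finset V} (hS : ∀ e, tl e ∈ S → hd e ∈ S) {e : E} (he : hd e ∈ S) :
    tl e ∈ S := by
  by_contra hte
  have hnonneg : ∀ f ∈ (univ : Finset E),
      0 ≤ (if hd f ∈ S then y f else 0) - (if tl f ∈ S then y f else 0) := by
    intro f _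
    by_cases htf : tl f ∈ S
    · simp [htf, hS f htf]
    · simp only [htf, if_false, sub_zero]
      split_ifs <;> linarith [hpos f]
  have he_zero := (sum_eq_zero_iff_of_nonneg hnonneg).mp (hy.sum_cut_eq_zero S) e (mem_univ e)
  simp only [he, hte, if_true, if_false, sub_zero] at he_zero
  exact (hpos e).ne' he_zero

theorem IsFlow.exists_isWalk [Fintype V] {y : E → ℤ} (hy : IsFlow hd tl y)
    (hpos : ∀ e, 0 < y e) (e : E) : ∃ L, IsWalk hd tl (hd e) (tl e) L := by
  classical
  let reach : Finset V := univ.filter fun v => ∃ L, IsWalk hd tl (hd e) v L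
  have hclosed : ∀ f, tl f ∈ reach → hd f ∈ reach := by
    simp only [reach, mem_filter, mem_univ, true_and]
    exact fun f ⟨L, hL⟩ => ⟨L ++ [f], hL.append ⟨rfl, rfl⟩⟩
  have hstart : hd e ∈ reach := by
    simp only [reach, mem_filter, mem_univ, true_and]
    exact ⟨[], rfl⟩
  simpa [reach] using hy.tl_mem_of_hd_mem hpos hclosed hstart

theorem IsFlow.isTotallyCyclic [Fintype V] {y : E → ℤ} (hy : IsFlow hd tl y)
    (hpos : ∀ e, 0 < y e) : IsTotallyCyclic hd tl :=
  isTotallyCyclic_of_forall_isWalk (hy.exists_isWalk hpos)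

theorem isFlow_oHead_oTail_iff (σ : E → Bool) (y : E → ℤ) :
    IsFlow (oHead hd tl σ) (oTail hd tl σ) y ↔ IsFlow hd tl (reorient σ y) := by
  have hterm : ∀ v e, (if oHead hd tl σ e = v then y e else 0) -
      (if oTail hd tl σ e = v then y e else 0) =
      (if hd e = v then reorient σ y e else 0) - (if tl e = v then reorient σ y e else 0) := by
    intro v e
    unfold oHead oTail reorient
    cases σ e <;> split_ifs <;> simp
  simp only [isFlow_iff_forall_sum_sub_eq_zero, hterm]

end Flow

end

theorem flow_count_eq_sum_over_totally_cyclic_general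
    {V E : Type*} [Fintype V] [Fintype E] [DecidableEq V]
    (hd tl : E → V) (k : E → ℤ) :
    flowCount hd tl k =
      Nat.card {σy : (E → Bool) × (E → ℤ) //
        IsTotallyCyclic (oHead hd tl σy.1) (oTail hd tl σy.1) ∧
        IsFlow (oHead hd tl σy.1) (oTail hd tl σy.1) σy.2 ∧
        ∀ e, 0 < σy.2 e ∧ σy.2 e < k e} ∧
    Set.BijOn
      (fun x : E → ℤ => ((fun e => decide (0 < x e), fun e => |x e|) :
        (E → Bool) × (E → ℤ)))
      {x : E → ℤ | IsFlow hd tl x ∧ ∀ e, x e ≠ 0 ∧ |x e| < k e}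
      {σy : (E → Bool) × (E → ℤ) |
        IsTotallyCyclic (oHead hd tl σy.1) (oTail hd tl σy.1) ∧
        IsFlow (oHead hd tl σy.1) (oTail hd tl σy.1) σy.2 ∧
        ∀ e, 0 < σy.2 e ∧ σy.2 e < k e} := by
  refine (fun hbij => ⟨Nat.card_congr (hbij.equiv _), hbij⟩) ?_
  refine Set.InvOn.bijOn (f' := fun σy => reorient σy.1 σy.2)
    ⟨fun x _ => reorient_decide_pos_abs x, ?_⟩ ?_ ?_
  · rintro ⟨σ, y⟩ ⟨-, -, hy⟩
    simp only [abs_reorient, fun e => decide_pos_reorient σ (hy e).1, fun e => abs_of_pos (hy e).1]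
  · rintro x ⟨hx, hxk⟩
    have hpos : ∀ e, 0 < |x e| := fun e => abs_pos.mpr (hxk e).1
    have hflow : IsFlow (oHead hd tl fun e => decide (0 < x e))
        (oTail hd tl fun e => decide (0 < x e)) fun e => |x e| := by
      rwa [isFlow_oHead_oTail_iff, reorient_decide_pos_abs]
    exact ⟨hflow.isTotallyCyclic hpos, hflow, fun e => ⟨hpos e, (hxk e).2⟩⟩
  · rintro ⟨σ, y⟩ ⟨-, hy, hyk⟩
    refine ⟨(isFlow_oHead_oTail_iff σ y).mp hy, fun e => ?_⟩
    rw [← abs_pos, abs_reorient, abs_of_pos (hyk e).1]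
    exact hyk e

/-- `φ_G(k)` equals the number of pairs `(σ, y)` with `σ` a totally
cyclic orientation of `G` and `y` a `σ`-flow with `0 < y_e < k_e` for all `e`; indeed the
map sending a nowhere-zero `k`-flow `x` to `(σ_x, |x|)`, where `σ_x` is the unique
orientation compatible with `x`, is a bijection between the two sets. -/
theorem flow_count_eq_sum_over_totally_cyclic
    {V E : Type*} [Fintype V] [Fintype E] [DecidableEq V] [DecidableEq E]
    (hd tl : E → V) (k : E → ℤ) (hk : ∀ e, 0 < k e) :
    flowCount hd tl k =
      Nat.card {σy : (E → Bool) × (E → ℤ) //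
        IsTotallyCyclic (oHead hd tl σy.1) (oTail hd tl σy.1) ∧
        IsFlow (oHead hd tl σy.1) (oTail hd tl σy.1) σy.2 ∧
        ∀ e, 0 < σy.2 e ∧ σy.2 e < k e} ∧
    Set.BijOn
      (fun x : E → ℤ => ((fun e => decide (0 < x e), fun e => |x e|) :
        (E → Bool) × (E → ℤ)))
      {x : E → ℤ | IsFlow hd tl x ∧ ∀ e, x e ≠ 0 ∧ |x e| < k e}
      {σy : (E → Bool) × (E → ℤ) |
        IsTotallyCyclic (oHead hd tl σy.1) (oTail hd tl σy.1) ∧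
        IsFlow (oHead hd tl σy.1) (oTail hd tl σy.1) σy.2 ∧
        ∀ e, 0 < σy.2 e ∧ σy.2 e < k e} :=
  flow_count_eq_sum_over_totally_cyclic_general hd tl k
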